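/- Let Γ be a group generated by a finite symmetric set S, and let d_0 ∈ M_{|S|×1}(ℝΓ) be the column vector with entries (1 − s)_{s ∈ S}. Then the set of hermitian elements of the augmentation ideal I(Γ) coincides with the image under D_0 of the hermitian matrices: I(Γ)^h = { d_0* a d_0 : a ∈ M_{|S|}(ℝΓ), a* = a }. In particular, for every γ ∈ Γ there exists a row vector a ∈ M_{1×|S|}(ℝΓ) with 1 − γ = a d_0, and hence 2 − γ − γ⁻¹ = (1−γ)*(1−γ) = d_0* a* a d_0. -/

import Mathlib

open scoped BigOperators
noncomputable section

universe u v w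

/-- The star operation on the real group algebra, determined by `γ ↦ γ⁻¹`. -/
def rgStar {G : Type u} [Group G] (x : MonoidAlgebra ℝ G) : MonoidAlgebra ℝ G :=
  MonoidAlgebra.ofCoeff (Finsupp.mapDomain (fun g : G => g⁻¹) x.coeff)

/-- The adjoint of a matrix over the real group algebra:
transpose and apply `rgStar` entrywise. -/
def adjM {G : Type u} [Group G] {m n : Type*}
    (a : Matrix m n (MonoidAlgebra ℝ G)) : Matrix n m (MonoidAlgebra ℝ G) :=
  Matrix.of fun i j => rgStar (a j i)

/-- A square matrix over the real group algebra is a sum of hermitian squares. -/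
def IsSOS {G : Type u} [Group G] {p : Type*} [Fintype p]
    (x : Matrix p p (MonoidAlgebra ℝ G)) : Prop :=
  ∃ (m : ℕ) (a : Fin m → Matrix p p (MonoidAlgebra ℝ G)),
    x = ∑ i, adjM (a i) * a i

/-- A unitary representation of `G` on a real Hilbert space. -/
structure URep (G : Type u) [Group G] : Type (max u (v + 1)) where
  H : Type v
  [normed : NormedAddCommGroup H]
  [ips : InnerProductSpace ℝ H]
  [complete : CompleteSpace H]
  π : G →* (H →L[ℝ] H)
  isometric : ∀ (γ : G) (x : H), ‖π γ x‖ = ‖x‖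

attribute [instance] URep.normed URep.ips URep.complete

/-- The extension of a unitary representation to the real group algebra. -/
noncomputable def URep.alg {G : Type u} [Group G] (ρ : URep.{u, v} G) :
    MonoidAlgebra ℝ G →ₐ[ℝ] (ρ.H →L[ℝ] ρ.H) :=
  MonoidAlgebra.lift ℝ (ρ.H →L[ℝ] ρ.H) G ρ.π

/-- The entrywise application of a unitary representation to a matrix over the
real group algebra, acting on tuples of vectors. -/
noncomputable def URep.mat {G : Type u} [Group G] (ρ : URep.{u, v} G)
    {p q : Type*} [Fintype q] (a : Matrix p q (MonoidAlgebra ℝ G))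
    (z : q → ρ.H) : p → ρ.H :=
  fun i => ∑ j, ρ.alg (a i j) (z j)

/-- The inner product on a finite power of a real Hilbert space. -/
noncomputable def pInner {G : Type u} [Group G] (ρ : URep.{u, v} G)
    {p : Type*} [Fintype p] (x y : p → ρ.H) : ℝ :=
  ∑ i, inner ℝ (x i) (y i)

/-!
With `ε` the augmentation and `ξ = ∑ ξ_γ γ`, one has `∑ ξ_γ (2 - γ - γ⁻¹) = 2 ε(ξ) - ξ - ξ*`,
so a hermitian `ξ` with `ε(ξ) = 0` equals `-½ ∑ ξ_γ (1 - γ)*(1 - γ)`. Since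
`1 - xy = (1 - x) + x (1 - y)` and `1 - x⁻¹ = -x⁻¹ (1 - x)`, every `1 - γ` lies in the left ideal
generated by the `1 - s`, i.e. `1 - γ = r_γ d_0` for a row vector `r_γ`; hence
`ξ = d_0* (-½ ∑ ξ_γ r_γ* r_γ) d_0`. Conversely `d_0* a d_0` is hermitian for hermitian `a`, and
`ε` kills it because `ε(1 - s) = 0`.
-/

open MonoidAlgebra
open scoped Matrix

section Augmentation

variable (k G : Type*) [CommSemiring k] [Monoid G]

def augmentation : MonoidAlgebra k G →ₐ[k] k := lift k k G 1

variable {k G}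

lemma augmentation_apply (x : MonoidAlgebra k G) :
    augmentation k G x = x.coeff.sum fun _ c => c := by
  simp [augmentation, lift_apply, Finsupp.sum]

lemma augmentation_of (g : G) : augmentation k G (of k G g) = 1 := by
  simp [augmentation]

lemma augmentation_mul_apply_eq_zero {m n p : Type*} [Fintype n]
    (b : Matrix m n (MonoidAlgebra k G)) {d : Matrix n p (MonoidAlgebra k G)}
    (hd : ∀ i j, augmentation k G (d i j) = 0) (i : m) (j : p) :
    augmentation k G ((b * d) i j) = 0 := by
  simp [Matrix.mul_apply, hd]

end Augmentation

section GroupAlgebraStar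

variable {G : Type u} [Group G]

lemma rgStar_add (x y : MonoidAlgebra ℝ G) : rgStar (x + y) = rgStar x + rgStar y :=
  mapDomain_add _ x y

lemma rgStar_single (g : G) (c : ℝ) : rgStar (single g c) = single g⁻¹ c :=
  mapDomain_single

lemma rgStar_rgStar (x : MonoidAlgebra ℝ G) : rgStar (rgStar x) = x := by
  induction x using induction_linear with
  | zero => rfl
  | add x y hx hy => rw [rgStar_add, rgStar_add, hx, hy]
  | single g c => rw [rgStar_single, rgStar_single, inv_inv]

lemma rgStar_mul (x y : MonoidAlgebra ℝ G) : rgStar (x * y) = rgStar y * rgStar x := by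
  induction x using induction_linear with
  | zero => simp [rgStar]
  | add x x' hx hx' => rw [add_mul, rgStar_add, hx, hx', rgStar_add, mul_add]
  | single g c =>
    induction y using induction_linear with
    | zero => simp [rgStar]
    | add y y' hy hy' => rw [mul_add, rgStar_add, hy, hy', rgStar_add, add_mul]
    | single h d => simp only [single_mul_single, rgStar_single, mul_inv_rev, mul_comm c]

instance : StarRing (MonoidAlgebra ℝ G) where
  star := rgStar
  star_involutive := rgStar_rgStar
  star_mul := rgStar_mul
  star_add := rgStar_add

instance : StarModule ℝ (MonoidAlgebra ℝ G) where
  star_smul := mapDomain_smul _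

lemma star_single (g : G) (c : ℝ) : star (single g c) = single g⁻¹ c :=
  rgStar_single g c

lemma star_of (g : G) : star (of ℝ G g) = of ℝ G g⁻¹ :=
  star_single g 1

lemma star_one_sub_of_mul_one_sub_of (g : G) :
    star (1 - of ℝ G g) * (1 - of ℝ G g) = 2 - of ℝ G g - of ℝ G g⁻¹ := by
  rw [star_sub, star_one, star_of, sub_mul, mul_sub, mul_sub, ← map_mul, inv_mul_cancel, map_one,
    one_mul, mul_one, one_mul, ← one_add_one_eq_two]
  abel

lemma adjM_eq_conjTranspose {m n : Type*} (a : Matrix m n (MonoidAlgebra ℝ G)) : adjM a = aᴴ :=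
  rfl

end GroupAlgebraStar

section HermitianAugmentation

variable {G : Type u} [Group G]

lemma coeff_sum_smul_two_sub_of_sub_of_inv (ξ : MonoidAlgebra ℝ G) :
    (ξ.coeff.sum fun g c => c • (2 - of ℝ G g - of ℝ G g⁻¹)) =
      (2 * augmentation ℝ G ξ) • 1 - ξ - star ξ := by
  induction ξ using induction_linear with
  | zero => simp
  | add x y hx hy =>
    rw [coeff_add, Finsupp.sum_add_index' (h := fun g c => c • (2 - of ℝ G g - of ℝ G g⁻¹))
      (fun _ => zero_smul ℝ _) (fun _ _ _ => add_smul _ _ _), hx, hy, map_add, star_add, mul_add,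
      add_smul]
    abel
  | single g c =>
    simp only [coeff_single, augmentation_apply, Finsupp.sum_single_index, zero_smul, star_single,
      ← one_add_one_eq_two, of_apply]
    rw [← mul_one c, ← smul_single', ← smul_single']
    module

lemma eq_sum_smul_star_one_sub_of_mul_one_sub_of {ξ : MonoidAlgebra ℝ G}
    (haug : augmentation ℝ G ξ = 0) (hξ : star ξ = ξ) :
    ξ = ξ.coeff.sum fun g c => (-c / 2) • (star (1 - of ℝ G g) * (1 - of ℝ G g)) := by
  calc ξ = (-1 / 2 : ℝ) • ((2 * augmentation ℝ G ξ) • 1 - ξ - star ξ) := by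
        rw [haug, hξ]
        module
    _ = _ := by
      rw [← coeff_sum_smul_two_sub_of_sub_of_inv, Finsupp.smul_sum]
      simp only [star_one_sub_of_mul_one_sub_of, smul_smul]
      ring_nf

end HermitianAugmentation

lemma one_sub_mem_span_one_sub_of_mem_closure {G R ι : Type*} [Group G] [Ring R] (f : G →* R)
    (v : ι → G) {g : G} (hg : g ∈ Subgroup.closure (Set.range v)) :
    1 - f g ∈ Submodule.span R (Set.range fun i => 1 - f (v i)) := by
  induction hg using Subgroup.closure_induction with
  | mem _ hx =>
    obtain ⟨i, rfl⟩ := hx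
    exact Submodule.subset_span ⟨i, rfl⟩
  | one => simp
  | mul x y _ _ hx hy =>
    have h : 1 - f (x * y) = (1 - f x) + f x • (1 - f y) := by
      rw [map_mul, smul_eq_mul, mul_sub, mul_one]; abel
    exact h ▸ add_mem hx (Submodule.smul_mem _ _ hy)
  | inv x _ hx =>
    have h : 1 - f x⁻¹ = (-f x⁻¹) • (1 - f x) := by
      rw [smul_eq_mul, neg_mul, mul_sub, mul_one, ← map_mul, inv_mul_cancel, map_one]; abel
    exact h ▸ Submodule.smul_mem _ _ hx

lemma exists_row_mul_apply_eq_one_sub_of {G : Type u} [Group G] (S : Finset G)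
    (hgen : Subgroup.closure (S : Set G) = ⊤) (d0 : Matrix S (Fin 1) (MonoidAlgebra ℝ G))
    (hd0 : ∀ s j, d0 s j = 1 - of ℝ G s) (g : G) :
    ∃ a : Matrix (Fin 1) S (MonoidAlgebra ℝ G), (a * d0) 0 0 = 1 - of ℝ G g := by
  have hg : g ∈ Subgroup.closure (Set.range ((↑) : S → G)) := by
    simp [hgen]
  obtain ⟨c, hc⟩ := (Submodule.mem_span_range_iff_exists_fun _).mp
    (one_sub_mem_span_one_sub_of_mem_closure (of ℝ G) _ hg)
  exact ⟨Matrix.of fun _ s => c s, by simpa [Matrix.mul_apply, hd0] using hc⟩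

lemma conjTranspose_mul_conjTranspose_mul_self_mul_apply {n α : Type*} [Fintype n] [Semiring α]
    [StarRing α] (d : Matrix n (Fin 1) α) (a : Matrix (Fin 1) n α) :
    (dᴴ * (aᴴ * a) * d) 0 0 = star ((a * d) 0 0) * (a * d) 0 0 := by
  rw [← Matrix.mul_assoc, ← Matrix.conjTranspose_mul, Matrix.mul_assoc, Matrix.mul_apply,
    Fin.sum_univ_one, Matrix.conjTranspose_apply]

theorem stmt_11_general {G : Type u} [Group G] (S : Finset G)
    (hgen : Subgroup.closure (S : Set G) = ⊤)
    (d0 : Matrix ↥S (Fin 1) (MonoidAlgebra ℝ G))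
    (hd0 : ∀ (s : ↥S) (j : Fin 1), d0 s j = 1 - MonoidAlgebra.of ℝ G (s : G)) :
    ({ξ : MonoidAlgebra ℝ G |
        (Finsupp.sum ξ.coeff fun _ c => c) = 0 ∧ rgStar ξ = ξ} =
      {ξ : MonoidAlgebra ℝ G |
        ∃ a : Matrix ↥S ↥S (MonoidAlgebra ℝ G),
          adjM a = a ∧ ξ = (adjM d0 * a * d0) 0 0}) ∧
    ∀ γ : G, ∃ a : Matrix (Fin 1) ↥S (MonoidAlgebra ℝ G),
      (a * d0) 0 0 = 1 - MonoidAlgebra.of ℝ G γ ∧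
      (adjM d0 * (adjM a * a) * d0) 0 0 =
        2 - MonoidAlgebra.of ℝ G γ - MonoidAlgebra.of ℝ G γ⁻¹ := by
  choose r hr using exists_row_mul_apply_eq_one_sub_of S hgen d0 hd0
  have hsquare (g : G) :
      (d0ᴴ * ((r g)ᴴ * r g) * d0) 0 0 = star (1 - of ℝ G g) * (1 - of ℝ G g) := by
    rw [conjTranspose_mul_conjTranspose_mul_self_mul_apply, hr]
  simp only [adjM_eq_conjTranspose, ← augmentation_apply]
  refine ⟨Set.ext fun ξ => ⟨fun ⟨haug, hξ⟩ => ?_, ?_⟩, fun g => ⟨r g, hr g, ?_⟩⟩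
  · refine ⟨ξ.coeff.sum fun g c => (-c / 2) • ((r g)ᴴ * r g), ?_, ?_⟩
    · simp [Finsupp.sum, Matrix.conjTranspose_sum, Matrix.conjTranspose_smul,
        Matrix.conjTranspose_mul]
    · refine (eq_sum_smul_star_one_sub_of_mul_one_sub_of haug hξ).trans ?_
      simp [Finsupp.sum, Matrix.mul_sum, Matrix.sum_mul, Matrix.sum_apply, hsquare]
  · rintro ⟨a, ha, rfl⟩
    refine ⟨augmentation_mul_apply_eq_zero _ (fun _ _ => ?_) 0 0,
      (Matrix.isHermitian_conjTranspose_mul_mul d0 ha).apply 0 0⟩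
    rw [hd0, map_sub, map_one, augmentation_of, sub_self]
  · rw [hsquare, star_one_sub_of_mul_one_sub_of]

/-- for a finite symmetric generating set `S` of `Γ` and
`d_0 = (1 - s)_{s ∈ S} ∈ M_{|S|×1}(ℝΓ)`, the hermitian part of the augmentation
ideal equals `{d_0* a d_0 : a ∈ M_{|S|}(ℝΓ), a* = a}`.  In particular, for every
`γ ∈ Γ` there is a row vector `a` with `1 - γ = a d_0`, and hence
`2 - γ - γ⁻¹ = (1-γ)*(1-γ) = d_0* a* a d_0`. -/
theorem stmt_11 {G : Type u} [Group G] (S : Finset G)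
    (hsym : ∀ s ∈ S, s⁻¹ ∈ S)
    (hgen : Subgroup.closure (S : Set G) = ⊤)
    (d0 : Matrix ↥S (Fin 1) (MonoidAlgebra ℝ G))
    (hd0 : ∀ (s : ↥S) (j : Fin 1), d0 s j = 1 - MonoidAlgebra.of ℝ G (s : G)) :
    ({ξ : MonoidAlgebra ℝ G |
        (Finsupp.sum ξ.coeff fun _ c => c) = 0 ∧ rgStar ξ = ξ} =
      {ξ : MonoidAlgebra ℝ G |
        ∃ a : Matrix ↥S ↥S (MonoidAlgebra ℝ G),
          adjM a = a ∧ ξ = (adjM d0 * a * d0) 0 0}) ∧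
    ∀ γ : G, ∃ a : Matrix (Fin 1) ↥S (MonoidAlgebra ℝ G),
      (a * d0) 0 0 = 1 - MonoidAlgebra.of ℝ G γ ∧
      (adjM d0 * (adjM a * a) * d0) 0 0 =
        2 - MonoidAlgebra.of ℝ G γ - MonoidAlgebra.of ℝ G γ⁻¹ :=
  stmt_11_general S hgen d0 hd0
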